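/- arXiv:2509.04631 — 2 statements merged into one kernel-verified Lean document; each statement's English description precedes it below -/
import Mathlib

section
/- Let (X_i, Y_i), i = 1,...,n be i.i.d. from a finite joint distribution P. If a sequence of set-valued predictors Γ_n satisfies limsup_{n→∞} (1/n)·log E[|Γ_n|] < H(Y|X), then the confidence vanishes: lim_{n→∞} P((Y_1,...,Y_n) ∈ Γ_n(X_1,...,X_n)) = 0. -/
/-!
Write `g(x, y) = -log P(y | x)`, so that `H(Y|X) = E[g]`. Since
`P(xs, ys) = P(xs) · exp(-∑ g(xᵢ, yᵢ))`, a predictor can only cover pairs with `∑ g(xᵢ, yᵢ) < n(H - δ)`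
(atypical ones, of probability `O(1/n)` by Chebyshev's inequality for the i.i.d. sum) or pairs of
conditional probability at most `exp(-n(H - δ))`; the latter contribute at most
`exp(-n(H - δ)) · E|Γ n|`, which is at most `exp(-nδ)` once `E|Γ n| ≤ exp(n(H - 2δ))`.
-/

open Finset Real Filter

section ProductWeight

variable {Z : Type*} [Fintype Z] {n : ℕ} {p : Z → ℝ}

theorem sum_prod_mul_prod_apply (F : Fin n → Z → ℝ) :
    ∑ zs : Fin n → Z, (∏ k, p (zs k)) * ∏ k, F k (zs k) = ∏ k, ∑ z, p z * F k z := by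
  simp_rw [← prod_mul_distrib]
  exact (Fintype.prod_sum fun k z => p z * F k z).symm

theorem sum_prod_mul_apply (hp : ∑ z, p z = 1) (i : Fin n) (f : Z → ℝ) :
    ∑ zs : Fin n → Z, (∏ k, p (zs k)) * f (zs i) = ∑ z, p z * f z := by
  simpa [ite_apply, mul_ite, apply_ite, hp] using
    sum_prod_mul_prod_apply (p := p) fun k => if k = i then f else 1

theorem sum_prod_mul_apply_mul_apply (hp : ∑ z, p z = 1) {i j : Fin n} (hij : i ≠ j)
    (f g : Z → ℝ) :
    ∑ zs : Fin n → Z, (∏ k, p (zs k)) * (f (zs i) * g (zs j)) =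
      (∑ z, p z * f z) * ∑ z, p z * g z := by
  have h := sum_prod_mul_prod_apply (p := p) fun k =>
    (if k = i then f else 1) * (if k = j then g else 1)
  simp only [Pi.mul_apply, ite_apply, Pi.one_apply, prod_mul_distrib, Fintype.prod_ite_eq'] at h
  have hk : ∀ k, ∑ z, p z * ((if k = i then f z else 1) * if k = j then g z else 1) =
      (if k = i then ∑ z, p z * f z else 1) * if k = j then ∑ z, p z * g z else 1 := by
    intro k
    by_cases hki : k = i
    · simp [hki, hij]
    · by_cases hkj : k = j <;> simp [hki, hkj, hp, hij.symm]
  rw [h, prod_congr rfl fun k _ => hk k, prod_mul_distrib, Fintype.prod_ite_eq',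
    Fintype.prod_ite_eq']

theorem sum_prod_mul_sum_sq (hp : ∑ z, p z = 1) {h : Z → ℝ} (hh : ∑ z, p z * h z = 0) :
    ∑ zs : Fin n → Z, (∏ k, p (zs k)) * (∑ i, h (zs i)) ^ 2 = n * ∑ z, p z * h z ^ 2 := by
  have hij : ∀ i j : Fin n, ∑ zs : Fin n → Z, (∏ k, p (zs k)) * (h (zs i) * h (zs j)) =
      if i = j then ∑ z, p z * h z ^ 2 else 0 := by
    intro i j
    split_ifs with hij
    · subst hij
      simpa [← sq] using sum_prod_mul_apply hp i (h · ^ 2)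
    · simp [sum_prod_mul_apply_mul_apply hp hij, hh]
  calc ∑ zs : Fin n → Z, (∏ k, p (zs k)) * (∑ i, h (zs i)) ^ 2
      = ∑ i, ∑ j, ∑ zs : Fin n → Z, (∏ k, p (zs k)) * (h (zs i) * h (zs j)) := by
        simp_rw [sq, sum_mul_sum, mul_sum]
        rw [sum_comm]
        simp_rw [sum_comm (γ := Fin n → Z)]
    _ = n * ∑ z, p z * h z ^ 2 := by simp [hij]

theorem sum_mul_ite_lt_sub_le {W : Type*} [Fintype W] {w : W → ℝ} (hw : ∀ z, 0 ≤ w z)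
    (f : W → ℝ) (a : ℝ) {t : ℝ} (ht : 0 < t) :
    ∑ z, w z * (if f z < a - t then 1 else 0) ≤ (∑ z, w z * (f z - a) ^ 2) / t ^ 2 := by
  rw [sum_div]
  refine sum_le_sum fun z _ => ?_
  rw [mul_div_assoc]
  refine mul_le_mul_of_nonneg_left ?_ (hw z)
  split_ifs with hz
  · rw [one_le_div (by positivity)]
    nlinarith
  · positivity

theorem sum_prod_mul_ite_sum_lt_le (hp0 : ∀ z, 0 ≤ p z) (hp1 : ∑ z, p z = 1) (g : Z → ℝ)
    {t : ℝ} (ht : 0 < t) :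
    ∑ zs : Fin n → Z, (∏ k, p (zs k)) *
        (if ∑ i, g (zs i) < n * ∑ z, p z * g z - t then 1 else 0) ≤
      n * (∑ z, p z * (g z - ∑ z', p z' * g z') ^ 2) / t ^ 2 := by
  set m := ∑ z, p z * g z
  have hcentered : ∑ z, p z * (g z - m) = 0 := by
    simp [mul_sub, sum_sub_distrib, ← sum_mul, hp1, m]
  have hsum : ∀ zs : Fin n → Z, ∑ i, g (zs i) - n * m = ∑ i, (g (zs i) - m) := by
    simp [sum_sub_distrib]
  calc _ ≤ (∑ zs : Fin n → Z, (∏ k, p (zs k)) * (∑ i, g (zs i) - n * m) ^ 2) / t ^ 2 :=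
        sum_mul_ite_lt_sub_le (fun zs => prod_nonneg fun k _ => hp0 (zs k)) _ _ ht
    _ = n * (∑ z, p z * (g z - m) ^ 2) / t ^ 2 := by
        simp_rw [hsum, sum_prod_mul_sum_sq hp1 hcentered]

end ProductWeight

theorem sum_sum_arrow_eq_sum_arrow_prod {ι X Y : Type*} [Fintype ι] [DecidableEq ι]
    [Fintype X] [Fintype Y] (F : (ι → X × Y) → ℝ) :
    ∑ xs : ι → X, ∑ ys : ι → Y, F (fun i => (xs i, ys i)) = ∑ zs : ι → X × Y, F zs := by
  rw [← Fintype.sum_prod_type']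
  exact Fintype.sum_equiv (Equiv.arrowProdEquivProdArrow ι (fun _ => X) (fun _ => Y)).symm _ _
    fun _ => rfl

theorem log_div_le_log_natCast {a : ℝ} {k n : ℕ} (ha0 : 0 ≤ a) (ha : a ≤ (k : ℝ) ^ n) :
    log a / n ≤ log k := by
  rcases ha0.eq_or_lt with rfl | ha0
  · simpa using log_natCast_nonneg k
  rcases n.eq_zero_or_pos with rfl | hn
  · simpa using log_natCast_nonneg k
  rw [div_le_iff₀' (by exact_mod_cast hn), ← log_pow]
  exact log_le_log ha0 ha

theorem le_exp_mul_of_log_div_lt {a r : ℝ} {n : ℕ} (ha : 0 ≤ a) (hn : 0 < n)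
    (h : log a / n < r) : a ≤ exp (n * r) := by
  rcases ha.eq_or_lt with rfl | ha
  · positivity
  rw [← log_le_iff_le_exp ha]
  rw [div_lt_iff₀' (by exact_mod_cast hn)] at h
  exact h.le

theorem eventually_le_exp_mul_of_limsup_log_div_lt {a : ℕ → ℝ} {k : ℕ} {r : ℝ}
    (ha0 : ∀ n, 0 ≤ a n) (hak : ∀ n, a n ≤ (k : ℝ) ^ n)
    (h : limsup (fun n : ℕ => log (a n) / n) atTop < r) :
    ∀ᶠ n : ℕ in atTop, a n ≤ exp (n * r) := by
  have hbdd : IsBoundedUnder (· ≤ ·) atTop fun n : ℕ => log (a n) / n :=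
    isBoundedUnder_of ⟨_, fun n => log_div_le_log_natCast (ha0 n) (hak n)⟩
  filter_upwards [eventually_lt_of_limsup_lt h hbdd, eventually_gt_atTop 0] with n hn hn0
  exact le_exp_mul_of_log_div_lt (ha0 n) hn0 hn

section ConditionalInformation

variable {X Y : Type*} [Fintype Y] {P : X → Y → ℝ}

noncomputable def condInfo (P : X → Y → ℝ) (z : X × Y) : ℝ :=
  -log (P z.1 z.2 / ∑ y, P z.1 y)

noncomputable def condEntropy [Fintype X] (P : X → Y → ℝ) : ℝ :=
  ∑ z : X × Y, P z.1 z.2 * condInfo P z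

theorem condEntropy_eq [Fintype X] (P : X → Y → ℝ) :
    condEntropy P = -∑ x, ∑ y, P x y * log (P x y / ∑ y', P x y') := by
  simp [condEntropy, condInfo, Fintype.sum_prod_type]

theorem le_sum_mul_exp_neg_condInfo (hP : ∀ x y, 0 ≤ P x y) (x : X) (y : Y) :
    P x y ≤ (∑ y', P x y') * exp (-condInfo P (x, y)) := by
  have hq : P x y ≤ ∑ y', P x y' := single_le_sum (fun y' _ => hP x y') (mem_univ y)
  rcases (hP x y).eq_or_lt with h | h
  · rw [← h]
    exact mul_nonneg (h.le.trans hq) (exp_pos _).le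
  rw [condInfo, neg_neg, exp_log (div_pos h (h.trans_le hq)),
    mul_div_cancel₀ _ (h.trans_le hq).ne']

theorem prod_le_prod_sum_mul_exp_neg_sum_condInfo (hP : ∀ x y, 0 ≤ P x y) {n : ℕ}
    (xs : Fin n → X) (ys : Fin n → Y) :
    ∏ i, P (xs i) (ys i) ≤
      (∏ i, ∑ y, P (xs i) y) * exp (-∑ i, condInfo P (xs i, ys i)) := by
  rw [← sum_neg_distrib, exp_sum, ← prod_mul_distrib]
  exact prod_le_prod (fun i _ => hP _ _) fun i _ => le_sum_mul_exp_neg_condInfo hP _ _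

theorem prod_mul_ite_mem_le [DecidableEq Y] (hP : ∀ x y, 0 ≤ P x y) {n : ℕ}
    (s : Finset (Fin n → Y)) (c : ℝ) (xs : Fin n → X) (ys : Fin n → Y) :
    (∏ i, P (xs i) (ys i)) * (if ys ∈ s then 1 else 0) ≤
      exp (-c) * ((∏ i, ∑ y, P (xs i) y) * (if ys ∈ s then 1 else 0)) +
        (∏ i, P (xs i) (ys i)) * (if ∑ i, condInfo P (xs i, ys i) < c then 1 else 0) := by
  have hP0 : 0 ≤ ∏ i, P (xs i) (ys i) := prod_nonneg fun i _ => hP _ _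
  have hq0 : 0 ≤ ∏ i, ∑ y, P (xs i) y := prod_nonneg fun i _ => sum_nonneg fun y _ => hP _ _
  by_cases hc : ∑ i, condInfo P (xs i, ys i) < c
  · have := mul_nonneg (exp_pos (-c)).le hq0
    split_ifs <;> linarith
  · have htypical : ∏ i, P (xs i) (ys i) ≤ exp (-c) * ∏ i, ∑ y, P (xs i) y :=
      calc _ ≤ (∏ i, ∑ y, P (xs i) y) * exp (-∑ i, condInfo P (xs i, ys i)) :=
            prod_le_prod_sum_mul_exp_neg_sum_condInfo hP xs ys
        _ ≤ (∏ i, ∑ y, P (xs i) y) * exp (-c) := by gcongr; linarith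
        _ = _ := mul_comm _ _
    split_ifs <;> simp [htypical]

theorem sum_sum_prod_mul_ite_mem_le [Fintype X] [DecidableEq Y] (hP : ∀ x y, 0 ≤ P x y)
    {n : ℕ} (G : (Fin n → X) → Finset (Fin n → Y)) (c : ℝ) :
    ∑ xs : Fin n → X, ∑ ys : Fin n → Y, (∏ i, P (xs i) (ys i)) * (if ys ∈ G xs then 1 else 0) ≤
      exp (-c) * ∑ xs : Fin n → X, (∏ i, ∑ y, P (xs i) y) * ((G xs).card : ℝ) +
        ∑ zs : Fin n → X × Y, (∏ i, P (zs i).1 (zs i).2) *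
          (if ∑ i, condInfo P (zs i) < c then 1 else 0) := by
  refine (sum_le_sum fun xs _ => sum_le_sum fun ys _ =>
    prod_mul_ite_mem_le hP (G xs) c xs ys).trans_eq ?_
  simp_rw [sum_add_distrib, mul_sum]
  congr 1
  · refine sum_congr rfl fun xs _ => ?_
    simp_rw [← mul_sum, sum_boole, filter_mem_eq_inter, univ_inter]
  · exact sum_sum_arrow_eq_sum_arrow_prod fun zs => (∏ i, P (zs i).1 (zs i).2) *
      (if ∑ i, condInfo P (zs i) < c then 1 else 0)

theorem sum_prod_sum_mul_card_le [Fintype X] (hP : ∀ x y, 0 ≤ P x y)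
    (hPsum : ∑ x, ∑ y, P x y = 1) {n : ℕ} (G : (Fin n → X) → Finset (Fin n → Y)) :
    ∑ xs : Fin n → X, (∏ i, ∑ y, P (xs i) y) * ((G xs).card : ℝ) ≤ (Fintype.card Y : ℝ) ^ n := by
  have hmass : ∑ xs : Fin n → X, ∏ i, ∑ y, P (xs i) y = 1 := by
    rw [← Fintype.prod_sum fun _ x => ∑ y, P x y, hPsum, prod_const_one]
  calc _ ≤ ∑ xs : Fin n → X, (∏ i, ∑ y, P (xs i) y) * (Fintype.card Y : ℝ) ^ n := by
        refine sum_le_sum fun xs _ => mul_le_mul_of_nonneg_left ?_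
          (prod_nonneg fun i _ => sum_nonneg fun y _ => hP _ _)
        exact_mod_cast (card_le_univ (G xs)).trans_eq (by simp)
    _ = _ := by rw [← sum_mul, hmass, one_mul]

theorem sum_sum_prod_mul_ite_mem_le_exp_mul_add [Fintype X] [DecidableEq Y]
    (hP : ∀ x y, 0 ≤ P x y) (hPsum : ∑ x, ∑ y, P x y = 1) {n : ℕ}
    (G : (Fin n → X) → Finset (Fin n → Y)) {t : ℝ} (ht : 0 < t) :
    ∑ xs : Fin n → X, ∑ ys : Fin n → Y, (∏ i, P (xs i) (ys i)) * (if ys ∈ G xs then 1 else 0) ≤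
      exp (-(n * condEntropy P - t)) *
          ∑ xs : Fin n → X, (∏ i, ∑ y, P (xs i) y) * ((G xs).card : ℝ) +
        n * (∑ z : X × Y, P z.1 z.2 * (condInfo P z - condEntropy P) ^ 2) / t ^ 2 := by
  refine (sum_sum_prod_mul_ite_mem_le hP G (n * condEntropy P - t)).trans ?_
  gcongr
  exact sum_prod_mul_ite_sum_lt_le (fun z => hP z.1 z.2) (by rwa [Fintype.sum_prod_type])
    (condInfo P) ht

end ConditionalInformation

/-- **strong converse.** For i.i.d. pairs `(X_i,Y_i) ~ P` on finite
alphabets, if a sequence of set-valued predictors `Γ n` has efficiency rate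
`limsup_n (1/n)·log E[|Γ n|] < H(Y|X)`, then the coverage probability
`cov n = P((Y_1,…,Y_n) ∈ Γ n (X_1,…,X_n))` tends to `0`. -/
theorem strong_converse_below_conditional_entropy
    {X Y : Type*} [Fintype X] [Fintype Y] [DecidableEq Y]
    (P : X → Y → ℝ) (hPnonneg : ∀ x y, 0 ≤ P x y)
    (hPsum : ∑ x, ∑ y, P x y = 1)
    (Γ : (n : ℕ) → ((Fin n → X) → Finset (Fin n → Y)))
    (cov : ℕ → ℝ)
    (hcov : ∀ n, cov n = ∑ xs : Fin n → X, ∑ ys : Fin n → Y,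
        (∏ i, P (xs i) (ys i)) * (if ys ∈ Γ n xs then 1 else 0))
    (hrate : Filter.limsup (fun n =>
        Real.log (∑ xs : Fin n → X,
          (∏ i, ∑ y, P (xs i) y) * (((Γ n xs).card : ℝ))) / n) Filter.atTop <
        -∑ x, ∑ y, P x y * Real.log (P x y / ∑ y', P x y')) :
    Filter.Tendsto cov Filter.atTop (nhds 0) := by
  set E : ℕ → ℝ := fun n => ∑ xs : Fin n → X, (∏ i, ∑ y, P (xs i) y) * ((Γ n xs).card : ℝ)
  set H := condEntropy P
  set V := ∑ z : X × Y, P z.1 z.2 * (condInfo P z - H) ^ 2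
  rw [← condEntropy_eq] at hrate
  obtain ⟨δ, hδ, hrateδ⟩ : ∃ δ > 0, limsup (fun n : ℕ => log (E n) / n) atTop < H - 2 * δ :=
    ⟨(H - limsup (fun n : ℕ => log (E n) / n) atTop) / 3, by linarith, by linarith⟩
  have hE : ∀ᶠ n : ℕ in atTop, E n ≤ exp (n * (H - 2 * δ)) :=
    eventually_le_exp_mul_of_limsup_log_div_lt (fun n => sum_nonneg fun xs _ =>
        mul_nonneg (prod_nonneg fun i _ => sum_nonneg fun y _ => hPnonneg _ _) (Nat.cast_nonneg _))
      (fun n => sum_prod_sum_mul_card_le hPnonneg hPsum (Γ n)) hrateδ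
  have hbound : ∀ᶠ n : ℕ in atTop, cov n ≤ exp (-(n * δ)) + V / δ ^ 2 / n := by
    filter_upwards [hE, eventually_gt_atTop 0] with n hEn hn
    calc cov n ≤ exp (-(n * H - n * δ)) * E n + n * V / (n * δ) ^ 2 :=
          hcov n ▸ sum_sum_prod_mul_ite_mem_le_exp_mul_add hPnonneg hPsum (Γ n) (by positivity)
      _ ≤ exp (-(n * H - n * δ)) * exp (n * (H - 2 * δ)) + n * V / (n * δ) ^ 2 := by gcongr
      _ = exp (-(n * δ)) + V / δ ^ 2 / n := by
          rw [← exp_add]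
          field_simp
          ring_nf
  have hlim : Tendsto (fun n : ℕ => exp (-(n * δ)) + V / δ ^ 2 / n) atTop (nhds 0) := by
    have hexp := tendsto_exp_neg_atTop_nhds_zero.comp
      (tendsto_natCast_atTop_atTop.atTop_mul_const hδ)
    simpa using hexp.add (tendsto_const_div_atTop_nhds_zero_nat (V / δ ^ 2))
  refine squeeze_zero' (Eventually.of_forall fun n => ?_) hbound hlim
  rw [hcov]
  exact sum_nonneg fun xs _ => sum_nonneg fun ys _ =>
    mul_nonneg (prod_nonneg fun i _ => hPnonneg _ _) (ite_nonneg zero_le_one le_rfl)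
end

section
/- Let X be a finite alphabet, P ∈ P_n a type of denominator n, and Q any distribution on X. Then the Q^n-probability of the type class T(P) satisfies (n+1)^{−|X|}·exp(−n·D(P‖Q)) ≤ Q^n(T(P)) ≤ exp(−n·D(P‖Q)). -/
/-! For `x` in the type class `T(P)` we have `Qⁿ(x) = ∏ₐ Q(a)^{nP(a)} = exp(-n D(P‖Q)) Pⁿ(x)`,
so `Qⁿ(T(P)) = exp(-n D(P‖Q)) Pⁿ(T(P))` and it remains to show
`(n+1)^{-|X|} ≤ Pⁿ(T(P)) ≤ 1`. The upper bound is trivial. For the lower one, `T(P)` is the most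
likely type class under `Pⁿ`: with `|T(P')|` the multinomial coefficient of the counts of `P'`,
this reduces to `m! / k! ≥ k^{m-k}`. As at most `(n+1)^{|X|}` type classes partition `Xⁿ`, which
has total mass `1`, the largest one has mass at least `(n+1)^{-|X|}`. -/

open Finset Real
open scoped Nat

lemma Nat.factorial_mul_pow_le_factorial_mul_pow (k m : ℕ) : k ! * k ^ m ≤ m ! * k ^ k := by
  rcases le_total m k with h | h
  · obtain ⟨j, rfl⟩ := Nat.exists_eq_add_of_le h
    have h_fact : m ! * (m + j).descFactorial j = (m + j)! := by
      simpa using Nat.factorial_mul_descFactorial (Nat.le_add_left j m)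
    calc (m + j)! * (m + j) ^ m = m ! * (m + j).descFactorial j * (m + j) ^ m := by rw [h_fact]
      _ ≤ m ! * (m + j) ^ j * (m + j) ^ m := by gcongr; exact Nat.descFactorial_le_pow _ _
      _ = m ! * (m + j) ^ (m + j) := by ring
  · obtain ⟨j, rfl⟩ := Nat.exists_eq_add_of_le h
    calc k ! * k ^ (k + j) = k ! * k ^ j * k ^ k := by ring
      _ ≤ (k + j)! * k ^ k := by
        gcongr
        simpa using Nat.factorial_mul_pow_sub_le_factorial (Nat.le_add_right k j)

lemma Nat.multinomial_mul_prod_pow_le {ι : Type*} (s : Finset ι) {c d : ι → ℕ}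
    (h : ∑ i ∈ s, d i = ∑ i ∈ s, c i) :
    multinomial s d * ∏ i ∈ s, c i ^ d i ≤ multinomial s c * ∏ i ∈ s, c i ^ c i := by
  have h_pos : 0 < (∏ i ∈ s, (d i)!) * ∏ i ∈ s, (c i)! := by positivity
  refine Nat.le_of_mul_le_mul_left ?_ h_pos
  calc (∏ i ∈ s, (d i)!) * (∏ i ∈ s, (c i)!) * (multinomial s d * ∏ i ∈ s, c i ^ d i)
      = (∑ i ∈ s, d i)! * ∏ i ∈ s, ((c i)! * c i ^ d i) := by
        rw [prod_mul_distrib, ← multinomial_spec]; ring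
    _ ≤ (∑ i ∈ s, c i)! * ∏ i ∈ s, ((d i)! * c i ^ c i) := by
        rw [h]
        exact Nat.mul_le_mul_left _
          (prod_le_prod' fun i _ => factorial_mul_pow_le_factorial_mul_pow _ _)
    _ = (∏ i ∈ s, (d i)!) * (∏ i ∈ s, (c i)!) * (multinomial s c * ∏ i ∈ s, c i ^ c i) := by
        rw [prod_mul_distrib, ← multinomial_spec]; ring

lemma pow_eq_exp_neg_mul_log_div_mul_pow {p q : ℝ} (hp : 0 < p) (hq : 0 < q) (k : ℕ) :
    q ^ k = exp (-(k * log (p / q))) * p ^ k := by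
  rw [← mul_neg, ← log_inv, inv_div, exp_nat_mul, exp_log (div_pos hq hp), ← mul_pow,
    div_mul_cancel₀ _ hp.ne']

section TypeClass

variable {X : Type*} [Fintype X] {n : ℕ}

lemma sum_prod_empirical (c : X → ℕ) (hc : ∑ a, c a = n) :
    ∑ x : Fin n → X, ∏ i, ((c (x i) : ℝ) / n) = 1 := by
  rw [← Fintype.piFinset_univ, ← sum_pow' _ fun a => (c a : ℝ) / n]
  rcases n.eq_zero_or_pos with rfl | hn
  · exact pow_zero _
  · rw [← sum_div, ← Nat.cast_sum, hc, div_self (by positivity), one_pow]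

lemma prod_pow_eq_exp_mul_prod_pow_empirical (c : X → ℕ) (hc : ∑ a, c a = n) {Q : X → ℝ}
    (hQ : ∀ a, 0 ≤ Q a) (habs : ∀ a, Q a = 0 → c a = 0) :
    ∏ a, Q a ^ c a = exp (-n * ∑ a, (c a : ℝ) / n * log ((c a : ℝ) / n / Q a)) *
      ∏ a, ((c a : ℝ) / n) ^ c a := by
  rw [mul_sum, exp_sum, ← prod_mul_distrib]
  refine prod_congr rfl fun a _ => ?_
  by_cases hca : c a = 0
  · simp [hca]
  have hca_pos : 0 < c a := Nat.pos_of_ne_zero hca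
  have hn : 0 < n :=
    hc ▸ hca_pos.trans_le (single_le_sum (fun a _ => Nat.zero_le (c a)) (mem_univ a))
  have hQa : 0 < Q a := (hQ a).lt_of_ne fun h => hca (habs a h.symm)
  have hnc : (n : ℝ) * ((c a : ℝ) / n) = c a := mul_div_cancel₀ _ (by positivity)
  rw [pow_eq_exp_neg_mul_log_div_mul_pow (p := (c a : ℝ) / n) (by positivity) hQa, neg_mul,
    ← mul_assoc, hnc]

variable [DecidableEq X]

lemma card_piAntidiag_univ_le (n : ℕ) :
    #(piAntidiag (univ : Finset X) n) ≤ (n + 1) ^ Fintype.card X := by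
  calc #(piAntidiag (univ : Finset X) n)
      ≤ #(Fintype.piFinset fun _ : X => range (n + 1)) := by
        refine card_le_card fun d hd => Fintype.mem_piFinset.mpr fun a => mem_range.mpr ?_
        rw [mem_piAntidiag] at hd
        have := hd.1 ▸ single_le_sum (fun a _ => Nat.zero_le (d a)) (mem_univ a)
        omega
    _ = (n + 1) ^ Fintype.card X := by simp

def typeCount (x : Fin n → X) (a : X) : ℕ := #{i | x i = a}

def typeClass (n : ℕ) (c : X → ℕ) : Finset (Fin n → X) := {x | ∀ a, typeCount x a = c a}

lemma prod_comp_eq_prod_pow_typeCount {M : Type*} [CommMonoid M] (x : Fin n → X) (f : X → M) :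
    ∏ i, f (x i) = ∏ a, f a ^ typeCount x a := by
  rw [← prod_fiberwise_of_maps_to' (fun i _ => mem_univ (x i))]
  simp only [prod_const, typeCount]

lemma sum_typeCount (x : Fin n → X) : ∑ a, typeCount x a = n := by
  simp only [typeCount]
  rw [← card_eq_sum_card_fiberwise (fun i _ => mem_univ (x i)), Finset.card_fin]

lemma sum_eq_sum_piAntidiag_sum_typeClass {M : Type*} [AddCommMonoid M] (f : (Fin n → X) → M) :
    ∑ x, f x = ∑ d ∈ piAntidiag univ n, ∑ x ∈ typeClass n d, f x := by
  rw [← sum_fiberwise_of_maps_to (g := typeCount)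
    (fun x _ => mem_piAntidiag.mpr ⟨sum_typeCount x, fun _ _ => mem_univ _⟩)]
  simp only [typeClass, funext_iff]

lemma sum_typeClass_prod {R : Type*} [CommSemiring R] (q : X → R) (c : X → ℕ) :
    ∑ x ∈ typeClass n c, ∏ i, q (x i) = #(typeClass n c) * ∏ a, q a ^ c a := by
  rw [← nsmul_eq_mul, ← sum_const]
  refine sum_congr rfl fun x hx => ?_
  simp only [typeClass, mem_filter] at hx
  simp only [prod_comp_eq_prod_pow_typeCount, hx]

/-- Both sides are the coefficient of `∏ₐ Xₐ ^ c a` in `(∑ₐ Xₐ) ^ n`, expanded once as a sum over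
words and once by the multinomial theorem. -/
lemma card_typeClass (c : X → ℕ) (hc : ∑ a, c a = n) :
    #(typeClass n c) = Nat.multinomial univ c := by
  have h := MvPolynomial.coeff_sum_X_pow_of_fintype (R := ℕ) (Finsupp.equivFunOnFinite.symm c) n
  rw [sum_pow', Fintype.piFinset_univ, MvPolynomial.coeff_sum] at h
  simp_rw [prod_comp_eq_prod_pow_typeCount, MvPolynomial.coeff_prod_X_pow] at h
  have hsum : ((Finsupp.equivFunOnFinite.symm c).sum fun _ m => m) = n := by
    rwa [Finsupp.sum_fintype _ _ fun _ => rfl]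
  rw [sum_boole, if_pos hsum, Finsupp.multinomial_eq_of_support_subset (subset_univ _)] at h
  simpa [typeClass, Finsupp.ext_iff, eq_comm] using h

lemma sum_typeClass_empirical_le_one (c : X → ℕ) (hc : ∑ a, c a = n) :
    ∑ x ∈ typeClass n c, ∏ i, ((c (x i) : ℝ) / n) ≤ 1 :=
  sum_prod_empirical c hc ▸ sum_le_univ_sum_of_nonneg fun x => by positivity

lemma sum_typeClass_empirical_le (c d : X → ℕ) (hc : ∑ a, c a = n) (hd : ∑ a, d a = n) :
    ∑ x ∈ typeClass n d, ∏ i, ((c (x i) : ℝ) / n) ≤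
      ∑ x ∈ typeClass n c, ∏ i, ((c (x i) : ℝ) / n) := by
  have hpow : ∀ e : X → ℕ, ∑ a, e a = n →
      ∏ a, ((c a : ℝ) / n) ^ e a = (∏ a, (c a : ℝ) ^ e a) / (n : ℝ) ^ n := fun e he => by
    simp only [div_pow, prod_div_distrib, prod_pow_eq_pow_sum, he]
  rw [sum_typeClass_prod (fun a => (c a : ℝ) / n), sum_typeClass_prod (fun a => (c a : ℝ) / n),
    card_typeClass d hd, card_typeClass c hc, hpow d hd, hpow c hc, mul_div_assoc',
    mul_div_assoc']
  refine div_le_div_of_nonneg_right ?_ (by positivity)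
  exact_mod_cast Nat.multinomial_mul_prod_pow_le univ (hd.trans hc.symm)

lemma inv_pow_card_le_sum_typeClass_empirical (c : X → ℕ) (hc : ∑ a, c a = n) :
    ((n + 1 : ℝ) ^ Fintype.card X)⁻¹ ≤ ∑ x ∈ typeClass n c, ∏ i, ((c (x i) : ℝ) / n) := by
  rw [inv_le_iff_one_le_mul₀' (by positivity)]
  calc (1 : ℝ) = ∑ d ∈ piAntidiag univ n, ∑ x ∈ typeClass n d, ∏ i, ((c (x i) : ℝ) / n) := by
        rw [← sum_eq_sum_piAntidiag_sum_typeClass, sum_prod_empirical c hc]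
    _ ≤ #(piAntidiag univ n) • ∑ x ∈ typeClass n c, ∏ i, ((c (x i) : ℝ) / n) :=
        sum_le_card_nsmul _ _ _ fun d hd =>
          sum_typeClass_empirical_le c d hc (mem_piAntidiag.mp hd).1
    _ ≤ (n + 1 : ℝ) ^ Fintype.card X * ∑ x ∈ typeClass n c, ∏ i, ((c (x i) : ℝ) / n) := by
        rw [nsmul_eq_mul]
        gcongr
        exact_mod_cast card_piAntidiag_univ_le n

end TypeClass

theorem type_class_probability_bounds_general
    {X : Type*} [Fintype X] [DecidableEq X] (n : ℕ)
    (c : X → ℕ) (hc : ∑ a, c a = n)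
    (P : X → ℝ) (hP : ∀ a, P a = (c a : ℝ) / n)
    (Q : X → ℝ) (hQnonneg : ∀ a, 0 ≤ Q a)
    (habs : ∀ a, Q a = 0 → c a = 0)
    (D : ℝ) (hD : D = ∑ a, P a * Real.log (P a / Q a)) :
    ((n + 1 : ℝ) ^ Fintype.card X)⁻¹ * Real.exp (-(n : ℝ) * D) ≤
      ∑ x ∈ (Finset.univ.filter fun x : Fin n → X =>
          ∀ a, (Finset.univ.filter fun i => x i = a).card = c a), ∏ i, Q (x i) ∧
    ∑ x ∈ (Finset.univ.filter fun x : Fin n → X =>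
        ∀ a, (Finset.univ.filter fun i => x i = a).card = c a), ∏ i, Q (x i) ≤
      Real.exp (-(n : ℝ) * D) := by
  obtain rfl : P = fun a => (c a : ℝ) / n := funext hP
  subst hD
  change _ ≤ ∑ x ∈ typeClass n c, _ ∧ ∑ x ∈ typeClass n c, _ ≤ _
  have hQP : ∑ x ∈ typeClass n c, ∏ i, Q (x i) =
      exp (-n * ∑ a, (c a : ℝ) / n * log ((c a : ℝ) / n / Q a)) *
        ∑ x ∈ typeClass n c, ∏ i, ((c (x i) : ℝ) / n) := by
    rw [sum_typeClass_prod, sum_typeClass_prod (fun a => (c a : ℝ) / n),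
      prod_pow_eq_exp_mul_prod_pow_empirical c hc hQnonneg habs]
    ring
  rw [hQP, mul_comm]
  constructor
  · gcongr
    exact inv_pow_card_le_sum_typeClass_empirical c hc
  · exact mul_le_of_le_one_right (exp_nonneg _) (sum_typeClass_empirical_le_one c hc)

/-- For a type `P ∈ P_n` (counts `c : X → ℕ`, `∑ₐ c a = n`,
`P a = c a / n`) and any distribution `Q` on `X` with `P ≪ Q`, the `Q^n`-probability of
the type class `T(P)` satisfies
`(n+1)^{−|X|}·exp(−n·D(P‖Q)) ≤ Q^n(T(P)) ≤ exp(−n·D(P‖Q))`,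
where `D(P‖Q) = ∑ₐ P(a) log (P(a)/Q(a))` (natural logarithm). -/
theorem type_class_probability_bounds
    {X : Type*} [Fintype X] [DecidableEq X] (n : ℕ) (hn : 0 < n)
    (c : X → ℕ) (hc : ∑ a, c a = n)
    (P : X → ℝ) (hP : ∀ a, P a = (c a : ℝ) / n)
    (Q : X → ℝ) (hQnonneg : ∀ a, 0 ≤ Q a) (hQsum : ∑ a, Q a = 1)
    (habs : ∀ a, Q a = 0 → c a = 0)
    (D : ℝ) (hD : D = ∑ a, P a * Real.log (P a / Q a)) :
    ((n + 1 : ℝ) ^ Fintype.card X)⁻¹ * Real.exp (-(n : ℝ) * D) ≤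
      ∑ x ∈ (Finset.univ.filter fun x : Fin n → X =>
          ∀ a, (Finset.univ.filter fun i => x i = a).card = c a), ∏ i, Q (x i) ∧
    ∑ x ∈ (Finset.univ.filter fun x : Fin n → X =>
        ∀ a, (Finset.univ.filter fun i => x i = a).card = c a), ∏ i, Q (x i) ≤
      Real.exp (-(n : ℝ) * D) :=
  type_class_probability_bounds_general n c hc P hP Q hQnonneg habs D hD
end
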